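/- arXiv:1504.07423 — 2 statements merged into one kernel-verified Lean document; each statement's English description precedes it below -/
import Mathlib

section
/- Let $f \ge 1$ and let $a_1 \le a_2 \le \dots \le a_f$ be a nondecreasing sequence of natural numbers. Let $i < j$ be two indices between $1$ and $f$, and let $h$ be an integer with $0 \le h \le a_i - 1$. Then $\sum_{k=1}^f \min(a_k, a_i + a_j - h) \;+\; \sum_{k=1}^f \min(a_k, h) \;\le\; \sum_{k=1}^f \min(a_k, a_i) \;+\; \sum_{k=1}^f \min(a_k, a_j) \;-\; (j - i + 1)$. -/
/-- For a nondecreasing sequence `a 1 ≤ a 2 ≤ ⋯ ≤ a f` of naturals, indices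
`1 ≤ i < j ≤ f`, and an integer `h` with `0 ≤ h ≤ a i - 1`, one has
`∑ k, min (a k) (a i + a j - h) + ∑ k, min (a k) h
  ≤ ∑ k, min (a k) (a i) + ∑ k, min (a k) (a j) - (j - i + 1)`. -/
theorem stmt_1 (f : ℕ) (hf : 1 ≤ f) (a : ℕ → ℕ)
    (hmono : ∀ k l, 1 ≤ k → k ≤ l → l ≤ f → a k ≤ a l)
    (i j : ℕ) (hi : 1 ≤ i) (hij : i < j) (hj : j ≤ f)
    (h : ℤ) (h0 : 0 ≤ h) (h1 : h ≤ (a i : ℤ) - 1) :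
    (∑ k ∈ Finset.Icc 1 f, min ((a k : ℤ)) ((a i : ℤ) + (a j : ℤ) - h))
      + (∑ k ∈ Finset.Icc 1 f, min ((a k : ℤ)) h)
    ≤ (∑ k ∈ Finset.Icc 1 f, min ((a k : ℤ)) ((a i : ℤ)))
      + (∑ k ∈ Finset.Icc 1 f, min ((a k : ℤ)) ((a j : ℤ)))
      - ((j : ℤ) - (i : ℤ) + 1) := by
  have hai_aj : a i ≤ a j := hmono i j hi hij.le hj
  have key : ∀ k ∈ Finset.Icc 1 f,
      min ((a k : ℤ)) ((a i : ℤ) + (a j : ℤ) - h) + min ((a k : ℤ)) h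
        + (if k ∈ Finset.Icc i j then (1 : ℤ) else 0)
      ≤ min ((a k : ℤ)) ((a i : ℤ)) + min ((a k : ℤ)) ((a j : ℤ)) := by
    intro k hk
    simp only [Finset.mem_Icc] at hk
    by_cases hmem : k ∈ Finset.Icc i j
    · rw [if_pos hmem]
      simp only [Finset.mem_Icc] at hmem
      have h2 : a i ≤ a k := hmono i k hi hmem.1 hk.2
      have h3 : a k ≤ a j := hmono k j hk.1 hmem.2 hj
      have h2' : (a i : ℤ) ≤ (a k : ℤ) := by exact_mod_cast h2
      have h3' : (a k : ℤ) ≤ (a j : ℤ) := by exact_mod_cast h3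
      omega
    · simp only [hmem, if_false]
      have hai_aj' : (a i : ℤ) ≤ (a j : ℤ) := by exact_mod_cast hai_aj
      omega
  have hsum := Finset.sum_le_sum key
  simp only [Finset.sum_add_distrib] at hsum
  have hcard : (∑ k ∈ Finset.Icc 1 f, (if k ∈ Finset.Icc i j then (1 : ℤ) else 0))
      = (j : ℤ) - (i : ℤ) + 1 := by
    rw [Finset.sum_ite_mem]
    have hsub : Finset.Icc 1 f ∩ Finset.Icc i j = Finset.Icc i j := by
      apply Finset.inter_eq_right.mpr
      intro x hx
      simp only [Finset.mem_Icc] at hx ⊢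
      omega
    rw [hsub, Finset.sum_const, Nat.card_Icc]
    have : i ≤ j := hij.le
    push_cast [Nat.sub_add_cancel (by omega : i ≤ j + 1)]
    ring_nf
    omega
  rw [hcard] at hsum
  linarith
end

section
/- Let $I$ be a finite index set, $a : I \to \mathbb{N}$, and fix $i \in I$ with $a_i \ge 1$. Let $D_1, D_2$ be real numbers and suppose there exists an integer $h$ with $0 \le h \le a_i - 1$ such that $D_1 + D_2 \le \sum_{j \in I} \min(a_j, 2a_i - h) + \sum_{j \in I} \min(a_j, h)$. Then $\min(D_1, D_2) \le \sum_{j \in I} \min(a_j, a_i) - \tfrac{1}{2}$; equivalently, $D_1$ and $D_2$ cannot both be strictly greater than $\sum_{j \in I} \min(a_j, a_i) - \tfrac{1}{2}$. -/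
/-- If `D₁ + D₂ ≤ ∑ j, min (a j) (2 a i - h) + ∑ j, min (a j) h` for some integer
`0 ≤ h ≤ a i - 1`, then `min D₁ D₂ ≤ ∑ j, min (a j) (a i) - 1/2`: the two degrees
cannot both exceed `∑ j, min (a j) (a i) - 1/2`. -/
theorem stmt_9 {I : Type*} [Fintype I] (a : I → ℕ) (i : I) (hai : 1 ≤ a i)
    (D₁ D₂ : ℝ)
    (hex : ∃ h : ℤ, 0 ≤ h ∧ h ≤ (a i : ℤ) - 1 ∧
      D₁ + D₂ ≤ (∑ j, min ((a j : ℝ)) (2 * (a i : ℝ) - (h : ℝ)))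
        + ∑ j, min ((a j : ℝ)) ((h : ℝ))) :
    min D₁ D₂ ≤ (∑ j, min ((a j : ℝ)) ((a i : ℝ))) - 1 / 2 := by
  classical
  obtain ⟨h, h0, h1, hle⟩ := hex
  have h1' : (h : ℝ) ≤ (a i : ℝ) - 1 := by exact_mod_cast h1
  have key : ∀ j : I, min ((a j : ℝ)) (2 * (a i : ℝ) - (h : ℝ)) + min ((a j : ℝ)) ((h : ℝ))
      ≤ 2 * min ((a j : ℝ)) ((a i : ℝ)) - (if j = i then (1 : ℝ) else 0) := by
    intro j
    by_cases hj : j = i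
    · subst hj
      simp only [eq_self_iff_true, if_true, min_self]
      have t1 : min ((a j : ℝ)) (2 * (a j : ℝ) - (h : ℝ)) ≤ (a j : ℝ) := min_le_left _ _
      have t2 : min ((a j : ℝ)) ((h : ℝ)) ≤ (h : ℝ) := min_le_right _ _
      linarith
    · simp only [if_neg hj]
      rcases le_total ((a j : ℝ)) ((a i : ℝ)) with hc | hc
      · have t1 : min ((a j : ℝ)) (2 * (a i : ℝ) - (h : ℝ)) ≤ (a j : ℝ) := min_le_left _ _
        have t2 : min ((a j : ℝ)) ((h : ℝ)) ≤ (a j : ℝ) := min_le_left _ _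
        rw [min_eq_left hc]; linarith
      · have t1 : min ((a j : ℝ)) (2 * (a i : ℝ) - (h : ℝ)) ≤ 2 * (a i : ℝ) - (h : ℝ) :=
          min_le_right _ _
        have t2 : min ((a j : ℝ)) ((h : ℝ)) ≤ (h : ℝ) := min_le_right _ _
        rw [min_eq_right hc]; linarith
  have hsum : (∑ j, min ((a j : ℝ)) (2 * (a i : ℝ) - (h : ℝ))) + ∑ j, min ((a j : ℝ)) ((h : ℝ))
      ≤ 2 * (∑ j, min ((a j : ℝ)) ((a i : ℝ))) - 1 := by
    rw [← Finset.sum_add_distrib]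
    calc ∑ j, (min ((a j : ℝ)) (2 * (a i : ℝ) - (h : ℝ)) + min ((a j : ℝ)) ((h : ℝ)))
        ≤ ∑ j, (2 * min ((a j : ℝ)) ((a i : ℝ)) - (if j = i then (1 : ℝ) else 0)) :=
          Finset.sum_le_sum fun j _ => key j
      _ = 2 * (∑ j, min ((a j : ℝ)) ((a i : ℝ))) - 1 := by
          rw [Finset.sum_sub_distrib, ← Finset.mul_sum, Finset.sum_ite_eq' Finset.univ i
            (fun _ => (1 : ℝ)), if_pos (Finset.mem_univ i)]
  have hmin1 : min D₁ D₂ ≤ D₁ := min_le_left _ _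
  have hmin2 : min D₁ D₂ ≤ D₂ := min_le_right _ _
  linarith
end
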